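/- Let m, n, c be natural numbers with 0 ≤ m < n and c ≥ 1. Then ν₂(S(c·2^n + 2^m, 2^n)) = n − 1 − m. -/

import Mathlib

/-!
The generating function `∑ₐ S(a + k, k) xᵃ = ∏_{i ≤ k} (1 - i x)⁻¹`, for `k = 2ⁿ`, splits into
the factors with odd `i` and those with even `i`. The odd factors multiply to
`(1 - x²)^(2ⁿ⁻²)` modulo `2ⁿ`, and the even ones give the series for `k = 2ⁿ⁻¹` evaluated at
`2x`. Comparing coefficients,
`S(a + 2ⁿ, 2ⁿ) ≡ ∑_{i ≤ a/2} C(2ⁿ⁻² - 1 + i, i) 2^(a-2i) S(a - 2i + 2ⁿ⁻¹, 2ⁿ⁻¹) (mod 2ⁿ)`.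
With Kummer's theorem, induction on `n` gives `2^τ ∣ S(a + 2ⁿ, 2ⁿ)` whenever `τ + ν₂(a) < n`.
For `a = d 2ⁿ + 2ᵐ` this bound kills every summand modulo `2ⁿ⁻ᵐ` except the one with
`i = ⌊a/2⌋`, and that summand has valuation exactly `n - 1 - m`.
-/

/-- Stirling numbers of the second kind. -/
def S : ℕ → ℕ → ℕ
  | 0, 0 => 1
  | 0, _ + 1 => 0
  | _ + 1, 0 => 0
  | n + 1, k + 1 => S n k + (k + 1) * S n (k + 1)

/-- Sum of binary digits. -/
def s₂ (n : ℕ) : ℕ := (Nat.digits 2 n).sum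

open Finset PowerSeries

theorem S_eq_stirlingSecond : ∀ n k, S n k = Nat.stirlingSecond n k
  | 0, 0 | 0, _ + 1 | _ + 1, 0 => rfl
  | n + 1, k + 1 => by
    rw [S, Nat.stirlingSecond_succ_succ, S_eq_stirlingSecond n k, S_eq_stirlingSecond n (k + 1),
      add_comm]

theorem odd_stirlingSecond_two (n : ℕ) : Odd (Nat.stirlingSecond (n + 2) 2) := by
  rw [Nat.stirlingSecond_succ_succ, Nat.stirlingSecond_one_right]
  exact ⟨_, rfl⟩

theorem stirlingSecond_two_pow_add_one (k : ℕ) :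
    Nat.stirlingSecond (2 ^ (k + 1) + 1) (2 ^ (k + 1)) = 2 ^ k * (2 ^ (k + 1) + 1) := by
  rw [Nat.stirlingSecond_succ_self_left, Nat.choose_two_right, Nat.add_sub_cancel]
  exact Nat.div_eq_of_eq_mul_left two_pos (by ring)

theorem two_pow_mul_modEq {y : ℕ} (j : ℕ) (hy : ¬2 ∣ y) :
    2 ^ j * y ≡ 2 ^ j [MOD 2 ^ (j + 1)] := by
  have := Nat.ModEq.mul_left' (2 ^ j) (show y ≡ 1 [MOD 2] by unfold Nat.ModEq; omega)
  rwa [mul_one, ← pow_succ] at this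

theorem modEq_two_pow_of_padicValNat_eq {x j : ℕ} (hx : x ≠ 0) (h : padicValNat 2 x = j) :
    x ≡ 2 ^ j [MOD 2 ^ (j + 1)] := by
  obtain ⟨e, y, hy, rfl⟩ := Nat.exists_eq_pow_mul_and_not_dvd hx 2 (by norm_num)
  rw [padicValNat.mul (by positivity) (by rintro rfl; simp at hy), padicValNat.prime_pow,
    padicValNat.eq_zero_of_not_dvd hy, add_zero] at h
  exact h ▸ two_pow_mul_modEq e hy

theorem padicValNat_eq_of_modEq_two_pow {x j : ℕ} (h : x ≡ 2 ^ j [MOD 2 ^ (j + 1)]) :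
    padicValNat 2 x = j := by
  have hmod : x % 2 ^ (j + 1) = 2 ^ j :=
    Eq.trans h (Nat.mod_eq_of_lt (Nat.pow_lt_pow_right one_lt_two j.lt_add_one))
  have hx : x = 2 ^ j * (2 * (x / 2 ^ (j + 1)) + 1) := by
    conv_lhs => rw [← Nat.div_add_mod x (2 ^ (j + 1)), hmod]
    ring
  rw [hx, padicValNat.mul (by positivity) (by omega), padicValNat.prime_pow,
    padicValNat.eq_zero_of_not_dvd (by omega), add_zero]

theorem sum_modEq_of_dvd {ι : Type*} [DecidableEq ι] {s : Finset ι} {f : ι → ℕ} {i : ι} {c : ℕ}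
    (hi : i ∈ s) (h : ∀ j ∈ s, j ≠ i → c ∣ f j) : ∑ j ∈ s, f j ≡ f i [MOD c] := by
  rw [← add_sum_erase s f hi]
  conv_rhs => rw [← add_zero (f i)]
  exact Nat.ModEq.add_left _ <| Nat.modEq_zero_iff_dvd.2 <|
    dvd_sum fun j hj => h j (mem_of_mem_erase hj) (ne_of_mem_erase hj)

theorem s₂_eq_mod_add_s₂_div (n : ℕ) : s₂ n = n % 2 + s₂ (n / 2) := by
  rcases Nat.eq_zero_or_pos n with rfl | hn
  · rfl
  · rw [s₂, s₂, Nat.digits_def' one_lt_two hn, List.sum_cons]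

theorem s₂_two_pow_mul_add (j q r : ℕ) (hr : r < 2 ^ j) : s₂ (2 ^ j * q + r) = s₂ q + s₂ r := by
  induction j generalizing r with
  | zero =>
    obtain rfl : r = 0 := by simpa using hr
    simp [s₂]
  | succ j ih =>
    have h2 : 2 ^ (j + 1) * q = 2 * (2 ^ j * q) := by ring
    have hr' : r / 2 < 2 ^ j := by rw [pow_succ] at hr; omega
    rw [s₂_eq_mod_add_s₂_div, s₂_eq_mod_add_s₂_div r, h2,
      show (2 * (2 ^ j * q) + r) / 2 = 2 ^ j * q + r / 2 by omega, ih _ hr']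
    omega

theorem s₂_two_pow (j : ℕ) : s₂ (2 ^ j) = 1 := by
  simpa [s₂] using s₂_two_pow_mul_add j 1 0 (by positivity)

theorem s₂_two_pow_sub_one (j : ℕ) : s₂ (2 ^ j - 1) = j := by
  induction j with
  | zero => rfl
  | succ j ih =>
    have hj := Nat.one_le_two_pow (n := j)
    rw [s₂_eq_mod_add_s₂_div, pow_succ, show (2 ^ j * 2 - 1) / 2 = 2 ^ j - 1 by omega, ih]
    omega

theorem padicValNat_two_choose_eq_s₂ (n k : ℕ) :
    padicValNat 2 ((n + k).choose k) = s₂ k + s₂ n - s₂ (n + k) := by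
  simpa [s₂] using sub_one_mul_padicValNat_choose_eq_sub_sum_digits' (p := 2) (k := k) (n := n)

theorem two_pow_dvd_choose {e b τ : ℕ} (hb : b ≠ 0) (h : τ + padicValNat 2 b ≤ e) :
    2 ^ τ ∣ (2 ^ e - 1 + b).choose b := by
  obtain ⟨c, rfl⟩ : ∃ c, b = c + 1 := ⟨b - 1, by omega⟩
  set C := (2 ^ e - 1 + (c + 1)).choose (c + 1)
  have hC : C ≠ 0 := (Nat.choose_pos (by omega)).ne'
  have key : C * (c + 1) = (2 ^ e - 1 + (c + 1)).choose c * 2 ^ e := by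
    rw [Nat.choose_succ_right_eq]
    congr 2
    have := Nat.one_le_two_pow (n := e)
    omega
  have hv : e ≤ padicValNat 2 C + padicValNat 2 (c + 1) := by
    rw [← padicValNat.mul hC (by omega), ← padicValNat_dvd_iff_le (by positivity), key]
    exact dvd_mul_left _ _
  exact (padicValNat_dvd_iff_le hC).2 (by omega)

theorem padicValNat_choose_two_pow_mul_add_two_pow {e g : ℕ} (q : ℕ) (hg : g ≤ e) :
    padicValNat 2 ((2 ^ e - 1 + (2 ^ (e + 1) * q + 2 ^ g)).choose (2 ^ (e + 1) * q + 2 ^ g)) =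
      e - g := by
  have hge : 2 ^ g ≤ 2 ^ e := Nat.pow_le_pow_right two_pos hg
  have hg1 := Nat.one_le_two_pow (n := g)
  have he1 : 2 ^ (e + 1) = 2 * 2 ^ e := by ring
  have hlow : s₂ (2 ^ e + (2 ^ g - 1)) = g + 1 := by
    rw [← Nat.sub_add_cancel hg, pow_add, mul_comm, s₂_two_pow_mul_add _ _ _ (by omega),
      s₂_two_pow, s₂_two_pow_sub_one, add_comm]
  have hsum : 2 ^ e - 1 + (2 ^ (e + 1) * q + 2 ^ g) =
      2 ^ (e + 1) * q + (2 ^ e + (2 ^ g - 1)) := by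
    omega
  rw [padicValNat_two_choose_eq_s₂, hsum,
    s₂_two_pow_mul_add (e + 1) q (2 ^ e + (2 ^ g - 1)) (by omega), hlow,
    s₂_two_pow_mul_add (e + 1) q (2 ^ g) (by omega), s₂_two_pow_sub_one, s₂_two_pow]
  omega

theorem not_two_dvd_choose_two_pow_mul (e q : ℕ) :
    ¬2 ∣ (2 ^ e - 1 + 2 ^ (e + 1) * q).choose (2 ^ (e + 1) * q) := by
  rw [dvd_iff_padicValNat_ne_zero (Nat.choose_pos (by omega)).ne', not_not]
  have h := s₂_two_pow_mul_add (e + 1) q (2 ^ e - 1)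
    (by have := Nat.one_le_two_pow (n := e); rw [pow_succ]; omega)
  have h0 := s₂_two_pow_mul_add (e + 1) q 0 (by positivity)
  rw [padicValNat_two_choose_eq_s₂, add_comm (2 ^ e - 1), h, ← add_zero (2 ^ (e + 1) * q), h0,
    s₂_two_pow_sub_one, show s₂ 0 = 0 from rfl]
  omega

theorem prod_range_two_mul {M : Type*} [CommMonoid M] (f : ℕ → M) (N : ℕ) :
    ∏ j ∈ range (2 * N), f j = ∏ i ∈ range N, f (2 * i) * f (2 * i + 1) := by
  induction N with
  | zero => simp
  | succ N ih =>
    rw [show 2 * (N + 1) = 2 * N + 1 + 1 by ring, prod_range_succ, prod_range_succ,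
      prod_range_succ, ih, mul_assoc]

section CommRing

variable {R : Type*} [CommRing R]

theorem dvd_prod_sub_prod {ι : Type*} (s : Finset ι) {d : R} {f g : ι → R}
    (h : ∀ i ∈ s, d ∣ f i - g i) : d ∣ ∏ i ∈ s, f i - ∏ i ∈ s, g i := by
  simp_rw [← Ideal.mem_span_singleton, ← Ideal.Quotient.mk_eq_mk_iff_sub_mem, map_prod] at h ⊢
  exact prod_congr rfl h

theorem two_mul_dvd_sq_sub_sq {a b c : R} (hc : 2 ∣ c) (h : c ∣ a - b) :
    2 * c ∣ a ^ 2 - b ^ 2 := by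
  obtain ⟨e, rfl⟩ := hc
  obtain ⟨h, hh⟩ := h
  exact ⟨h * (e * h + b), by linear_combination (a + b + 2 * e * h) * hh⟩

theorem dvd_sub_of_mul_eq_one {u v x y c : R} (hx : u * x = 1) (hy : v * y = 1)
    (h : c ∣ u - v) : c ∣ x - y := by
  rw [show x - y = x * y * -(u - v) by linear_combination y * hx - x * hy]
  exact h.neg_right.mul_left _

theorem two_pow_dvd_prod_odd_sub (x : R) (k : ℕ) :
    (2 : R) ^ (k + 2) ∣
      ∏ j ∈ range (2 ^ (k + 1)), (1 - (2 * j + 1) * x) - (1 - x ^ 2) ^ 2 ^ k := by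
  induction k with
  | zero =>
    refine ⟨x ^ 2 - x, ?_⟩
    rw [zero_add, pow_one, prod_range_succ, prod_range_one]
    push_cast
    ring
  | succ k ih =>
    -- The upper half of the factors is the lower half shifted by `-2 ^ (k + 2) * x`. Two
    -- consecutive factors have an even sum, so the shift changes their product only by a
    -- multiple of `2 ^ (k + 3)`.
    have hshift : (2 : R) ^ (k + 3) ∣
        ∏ j ∈ range (2 ^ (k + 1)), (1 - (2 * ((2 ^ (k + 1) + j : ℕ) : R) + 1) * x) -
          ∏ j ∈ range (2 ^ (k + 1)), (1 - (2 * (j : R) + 1) * x) := by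
      rw [Nat.pow_succ', prod_range_two_mul, prod_range_two_mul]
      refine dvd_prod_sub_prod _ fun i _ => ⟨2 ^ (k + 1) * x ^ 2 - x * (1 - (4 * i + 2) * x), ?_⟩
      push_cast
      ring
    have hsq := two_mul_dvd_sq_sub_sq (dvd_pow_self 2 (by omega)) ih
    rw [← pow_succ', ← pow_mul, ← pow_succ] at hsq
    rw [show 2 ^ (k + 1 + 1) = 2 ^ (k + 1) + 2 ^ (k + 1) by ring, prod_range_add,
      show ∀ P P' Q : R, P * P' - Q = P * (P' - P) + (P ^ 2 - Q) from fun _ _ _ => by ring]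
    exact dvd_add (hshift.mul_left _) hsq

variable (R) in
noncomputable def stirlingSeries (k : ℕ) : R⟦X⟧ :=
  mk fun a => (Nat.stirlingSecond (a + k) k : R)

theorem stirlingSeries_succ (k : ℕ) :
    stirlingSeries R (k + 1) =
      stirlingSeries R k + X * ((k + 1 : R⟦X⟧) * stirlingSeries R (k + 1)) := by
  ext (_ | a)
  · simp [stirlingSeries, Nat.stirlingSecond_self]
  · rw [map_add, coeff_succ_X_mul, show (k + 1 : R⟦X⟧) = C (k + 1 : R) by simp, coeff_C_mul]
    simp only [stirlingSeries, coeff_mk]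
    rw [show a + 1 + (k + 1) = a + k + 1 + 1 by ring, Nat.stirlingSecond_succ_succ,
      show a + 1 + k = a + k + 1 by ring, show a + (k + 1) = a + k + 1 by ring]
    push_cast
    ring

theorem prod_mul_stirlingSeries (k : ℕ) :
    (∏ i ∈ range k, (1 - (i + 1 : R⟦X⟧) * X)) * stirlingSeries R k = 1 := by
  induction k with
  | zero => ext (_ | a) <;> simp [stirlingSeries]
  | succ k ih =>
    rw [prod_range_succ, mul_assoc, show (1 - ((k : R⟦X⟧) + 1) * X) * stirlingSeries R (k + 1) =
      stirlingSeries R k by linear_combination stirlingSeries_succ (R := R) k, ih]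

theorem coeff_expand_two_mul (f g : R⟦X⟧) (a : ℕ) :
    coeff a (expand 2 two_ne_zero f * g) =
      ∑ i ∈ range (a / 2 + 1), coeff i f * coeff (a - 2 * i) g := by
  rw [coeff_mul, Finset.Nat.sum_antidiagonal_eq_sum_range_succ
    (fun u v => coeff u (expand 2 two_ne_zero f) * coeff v g)]
  simp only [coeff_expand, ite_mul, zero_mul]
  rw [← sum_filter]
  have heven : {u ∈ range (a + 1) | 2 ∣ u} = (range (a / 2 + 1)).image (2 * ·) := by
    ext u
    simp only [mem_filter, mem_range, mem_image]
    constructor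
    · rintro ⟨hu, j, rfl⟩
      exact ⟨j, by omega, rfl⟩
    · rintro ⟨j, hj, rfl⟩
      exact ⟨by omega, dvd_mul_right 2 j⟩
  rw [heven, sum_image fun i _ j _ h => by simpa using h]
  simp

end CommRing

theorem two_pow_dvd_stirlingSeries_sub (k : ℕ) :
    (2 : ℤ⟦X⟧) ^ (k + 2) ∣ stirlingSeries ℤ (2 ^ (k + 2)) -
      expand 2 two_ne_zero (invOneSubPow ℤ (2 ^ k)).val *
        rescale 2 (stirlingSeries ℤ (2 ^ (k + 1))) := by
  set G := ∏ i ∈ range (2 ^ (k + 1)), (1 - (i + 1 : ℤ⟦X⟧) * X)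
  have hinv : (1 - X) ^ 2 ^ k * (invOneSubPow ℤ (2 ^ k)).val = 1 := by
    rw [← invOneSubPow_inv_eq_one_sub_pow]
    exact (invOneSubPow ℤ (2 ^ k)).inv_val
  have hsplit : ∏ i ∈ range (2 ^ (k + 2)), (1 - (i + 1 : ℤ⟦X⟧) * X) =
      (∏ j ∈ range (2 ^ (k + 1)), (1 - (2 * (j : ℤ⟦X⟧) + 1) * X)) * rescale 2 G := by
    rw [Nat.pow_succ', prod_range_two_mul, prod_mul_distrib, map_prod]
    congr 1 <;> refine prod_congr rfl fun j _ => ?_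
    · push_cast
      ring
    · rw [map_sub, map_one, map_mul, rescale_X, map_add, map_one, map_natCast, map_ofNat C 2]
      push_cast
      ring
  refine dvd_sub_of_mul_eq_one (prod_mul_stirlingSeries _)
    (v := (1 - X ^ 2) ^ 2 ^ k * rescale 2 G) ?_ ?_
  · calc (1 - X ^ 2) ^ 2 ^ k * rescale 2 G *
          (expand 2 two_ne_zero (invOneSubPow ℤ (2 ^ k)).val *
            rescale 2 (stirlingSeries ℤ (2 ^ (k + 1))))
        = expand 2 two_ne_zero ((1 - X) ^ 2 ^ k * (invOneSubPow ℤ (2 ^ k)).val) *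
            rescale 2 (G * stirlingSeries ℤ (2 ^ (k + 1))) := by
          simp only [map_mul, map_pow, map_sub, map_one, expand_X]
          ring
      _ = 1 := by rw [hinv, prod_mul_stirlingSeries, map_one, map_one, one_mul]
  · rw [hsplit, ← sub_mul]
    exact (two_pow_dvd_prod_odd_sub X k).mul_right _

theorem stirlingSecond_two_pow_modEq_sum (k a : ℕ) :
    Nat.stirlingSecond (a + 2 ^ (k + 2)) (2 ^ (k + 2)) ≡
      ∑ i ∈ range (a / 2 + 1), (2 ^ k - 1 + i).choose i * 2 ^ (a - 2 * i) *
        Nat.stirlingSecond (a - 2 * i + 2 ^ (k + 1)) (2 ^ (k + 1)) [MOD 2 ^ (k + 2)] := by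
  obtain ⟨H, hH⟩ := two_pow_dvd_stirlingSeries_sub k
  have hc := congrArg (coeff a) hH
  rw [map_sub, coeff_expand_two_mul, show (2 : ℤ⟦X⟧) ^ (k + 2) = C (2 ^ (k + 2)) by simp,
    coeff_C_mul] at hc
  simp only [invOneSubPow_val_eq_mk_sub_one_add_choose_of_pos _ _ (Nat.two_pow_pos k),
    stirlingSeries, coeff_mk, coeff_rescale, Nat.choose_symm_add] at hc
  refine Int.natCast_modEq_iff.1 (Int.ModEq.symm (Int.modEq_iff_dvd.2 ⟨coeff a H, ?_⟩))
  push_cast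
  simp only [mul_assoc] at hc ⊢
  linear_combination hc

theorem two_pow_dvd_two_pow_mul {v τ m x : ℕ}
    (hx : ∀ σ, σ + padicValNat 2 v < m → 2 ^ σ ∣ x) (h : τ + padicValNat 2 v < m + v) :
    2 ^ τ ∣ 2 ^ v * x := by
  rcases le_total τ v with hτv | hvτ
  · exact (pow_dvd_pow 2 hτv).mul_right x
  · rw [← Nat.add_sub_cancel' hvτ, pow_add]
    exact mul_dvd_mul_left _ (hx _ (by omega))

theorem two_pow_dvd_stirlingSecond (n a τ : ℕ) (ha : a ≠ 0) (h : τ + padicValNat 2 a < n) :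
    2 ^ τ ∣ Nat.stirlingSecond (a + 2 ^ n) (2 ^ n) := by
  induction n generalizing a τ with
  | zero => omega
  | succ n ih =>
    rcases n with _ | k
    · obtain rfl : τ = 0 := by omega
      exact one_dvd _
    rw [(stirlingSecond_two_pow_modEq_sum k a).dvd_iff (pow_dvd_pow 2 (by omega))]
    refine dvd_sum fun i hi => ?_
    rcases Nat.eq_zero_or_pos (a - 2 * i) with hv | hv
    · have hai : a = 2 * i := by simp only [mem_range] at hi; omega
      have hνa : padicValNat 2 a = padicValNat 2 i + 1 := by
        rw [hai, padicValNat.mul two_ne_zero (by omega), padicValNat.self one_lt_two, add_comm]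
      rw [hv, pow_zero, mul_one, zero_add, Nat.stirlingSecond_self, mul_one]
      exact two_pow_dvd_choose (by omega) (by omega)
    · rw [mul_assoc]
      refine Dvd.dvd.mul_left (two_pow_dvd_two_pow_mul (fun σ hσ => ih _ _ hv.ne' hσ) ?_) _
      have := Nat.padicValNat_lt_self (p := 2) hv.ne'
      omega

theorem stirlingSecond_mul_two_pow_add_two_pow_modEq (k m d : ℕ) (hm : m ≤ k) :
    Nat.stirlingSecond (d * 2 ^ (k + 1) + 2 ^ m + 2 ^ (k + 1)) (2 ^ (k + 1)) ≡
      2 ^ (k - m) [MOD 2 ^ (k - m + 1)] := by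
  rcases k with _ | k
  · obtain rfl : m = 0 := by omega
    rw [show d * 2 ^ 1 + 2 ^ 0 + 2 ^ 1 = 2 * d + 1 + 2 by ring]
    exact Nat.odd_iff.1 (odd_stirlingSecond_two _)
  set a := d * 2 ^ (k + 2) + 2 ^ m
  have ha : a = 2 * (d * 2 ^ (k + 1)) + 2 ^ m := by ring
  refine ((stirlingSecond_two_pow_modEq_sum k a).of_dvd (pow_dvd_pow 2 (by omega))).trans ?_
  refine (sum_modEq_of_dvd (i := a / 2) (by simp) fun i hi hne => ?_).trans ?_
  · have hv : 2 ≤ a - 2 * i := by simp only [mem_range] at hi; omega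
    have hνv : padicValNat 2 (a - 2 * i) + 1 < a - 2 * i + m := by
      rcases m with _ | m
      · rw [padicValNat.eq_zero_of_not_dvd (by omega)]
        omega
      · have := Nat.padicValNat_lt_self (p := 2) (n := a - 2 * i) (by omega)
        omega
    rw [mul_assoc]
    exact Dvd.dvd.mul_left (two_pow_dvd_two_pow_mul
      (fun σ hσ => two_pow_dvd_stirlingSecond _ _ _ (by omega) hσ) (by omega)) _
  rcases m with _ | m
  · have h2 : a / 2 = 2 ^ (k + 1) * d := by rw [mul_comm]; omega
    rw [h2, show a - 2 * (2 ^ (k + 1) * d) = 1 by omega, add_comm 1,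
      stirlingSecond_two_pow_add_one, Nat.sub_zero,
      show ∀ C : ℕ, C * 2 ^ 1 * (2 ^ k * (2 ^ (k + 1) + 1)) =
        2 ^ (k + 1) * (C * (2 ^ (k + 1) + 1)) from fun _ => by ring]
    refine two_pow_mul_modEq _ fun h2C => ?_
    rcases Nat.prime_two.dvd_mul.1 h2C with h | h
    · exact not_two_dvd_choose_two_pow_mul k d h
    · rw [pow_succ] at h
      omega
  · have h2 : a / 2 = 2 ^ (k + 1) * d + 2 ^ m := by rw [mul_comm, pow_succ] at *; omega
    rw [h2, show a - 2 * (2 ^ (k + 1) * d + 2 ^ m) = 0 by rw [pow_succ] at *; omega, pow_zero,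
      mul_one, zero_add, Nat.stirlingSecond_self, mul_one]
    exact modEq_two_pow_of_padicValNat_eq (Nat.choose_pos (by omega)).ne'
      (by rw [padicValNat_choose_two_pow_mul_add_two_pow d (by omega)]; omega)

theorem stmt15 (m n c : ℕ) (hm : m < n) (hc : 1 ≤ c) :
    padicValNat 2 (S (c * 2 ^ n + 2 ^ m) (2 ^ n)) = n - 1 - m := by
  obtain ⟨d, rfl⟩ : ∃ d, c = d + 1 := ⟨c - 1, by omega⟩
  obtain ⟨k, rfl⟩ : ∃ k, n = k + 1 := ⟨n - 1, by omega⟩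
  rw [S_eq_stirlingSecond,
    show (d + 1) * 2 ^ (k + 1) + 2 ^ m = d * 2 ^ (k + 1) + 2 ^ m + 2 ^ (k + 1) by ring,
    show k + 1 - 1 - m = k - m by omega]
  exact padicValNat_eq_of_modEq_two_pow
    (stirlingSecond_mul_two_pow_add_two_pow_modEq k m d (by omega))
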